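/- arXiv:2109.10238 — 3 statements merged into one kernel-verified Lean document; each statement's English description precedes it below -/
import Mathlib

section
/- The product of two square-prime numbers is never a square-prime number. -/
def IsSP (n : ℕ) : Prop := ∃ p a : ℕ, p.Prime ∧ 2 ≤ a ∧ n = p * a ^ 2

lemma sp_odd_fac (p a s : ℕ) (hp : p.Prime) (ha : a ≠ 0) :
    Odd ((p * a ^ 2).factorization s) ↔ s = p := by
  rw [Nat.factorization_mul hp.ne_zero (pow_ne_zero 2 ha), Nat.factorization_pow,
    hp.factorization]
  simp only [Finsupp.add_apply, Finsupp.smul_apply, Finsupp.single_apply, smul_eq_mul]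
  rcases eq_or_ne p s with h | h
  · simp [h, Nat.odd_iff, Nat.add_mul_mod_self_left]
  · simp [h, Nat.odd_iff, Nat.mul_mod_right]
    exact fun hs => h hs.symm

theorem sp_mul_not_sp (m n : ℕ) (hm : IsSP m) (hn : IsSP n) : ¬ IsSP (m * n) := by
  obtain ⟨p, a, hp, ha2, rfl⟩ := hm
  obtain ⟨q, b, hq, hb2, rfl⟩ := hn
  rintro ⟨r, c, hr, hc2, hrc⟩
  have ha : a ≠ 0 := by omega
  have hb : b ≠ 0 := by omega
  have hc : c ≠ 0 := by omega
  have key : ∀ s : ℕ, (Odd ((p * a ^ 2 * (q * b ^ 2)).factorization s)) ↔ s = r := by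
    intro s
    rw [hrc, sp_odd_fac r c s hr hc]
  have key2 : ∀ s : ℕ, (Odd ((p * a ^ 2 * (q * b ^ 2)).factorization s)) ↔
      ((s = p) ↔ ¬ (s = q)) := by
    intro s
    rw [Nat.factorization_mul (Nat.mul_ne_zero hp.ne_zero (pow_ne_zero 2 ha)) (Nat.mul_ne_zero hq.ne_zero (pow_ne_zero 2 hb)), Finsupp.add_apply,
      Nat.odd_add, ← Nat.not_odd_iff_even, sp_odd_fac p a s hp ha, sp_odd_fac q b s hq hb]
  rcases eq_or_ne p q with h | h
  · have := (key r).mpr rfl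
    rw [key2] at this
    subst h
    tauto
  · have h1 : p = r := (key p).mp ((key2 p).mpr (by tauto))
    have h2 : q = r := (key q).mp ((key2 q).mpr (by tauto))
    exact h (h1.trans h2.symm)
end

section
/- If there exist primes p₁, p₂ with p₁ ≠ p₂ and integers a, b ≥ 2 such that p₁a² − p₂b² = g for some positive integer g, then there exist infinitely many pairs of square-prime numbers (s₁, s₂) with s₁ − s₂ = g. -/
/-- iterate multiplication by a Pell solution -/
def pellSeq (d u v X Y : ℕ) : ℕ → ℕ × ℕ
  | 0 => (X, Y)
  | n + 1 =>
    let p := pellSeq d u v X Y n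
    (p.1 * u + d * p.2 * v, p.1 * v + p.2 * u)

theorem sp_gap_infinite (g : ℕ) (hg : 0 < g)
    (h : ∃ p₁ p₂ a b : ℕ, p₁.Prime ∧ p₂.Prime ∧ p₁ ≠ p₂ ∧ 2 ≤ a ∧ 2 ≤ b ∧
      p₁ * a ^ 2 = p₂ * b ^ 2 + g) :
    {q : ℕ × ℕ | IsSP q.1 ∧ IsSP q.2 ∧ q.1 = q.2 + g}.Infinite := by
  obtain ⟨p₁, p₂, a, b, hp1, hp2, hne, ha, hb, hab⟩ := h
  set d : ℕ := p₁ * p₂ with hd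
  -- d is not a square
  have hdsq : ¬ IsSquare d := by
    rintro ⟨r, hr⟩
    have h1 : p₁ ∣ r := by
      have : p₁ ∣ r * r := ⟨p₂, hr.symm⟩
      exact hp1.dvd_of_dvd_pow (n := 2) (by rwa [sq])
    obtain ⟨s, rfl⟩ := h1
    have h2 : p₂ = p₁ * (s * s) := by
      have hp1pos : 0 < p₁ := hp1.pos
      have : p₁ * p₂ = p₁ * (p₁ * (s * s)) := by rw [← hd, hr]; ring
      exact Nat.eq_of_mul_eq_mul_left hp1pos this
    exact hne ((Nat.prime_dvd_prime_iff_eq hp1 hp2).mp ⟨s * s, h2⟩)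
  -- get a nontrivial Pell solution
  obtain ⟨x, y, hxy, hy0⟩ :=
    Pell.exists_of_not_isSquare (d := (d : ℤ))
      (by have : 0 < d := Nat.mul_pos hp1.pos hp2.pos; exact_mod_cast this)
      (by rwa [Int.isSquare_natCast_iff])
  set u : ℕ := x.natAbs with hu
  set v : ℕ := y.natAbs with hv
  have huv : u ^ 2 = d * v ^ 2 + 1 := by
    have hx2 : (x : ℤ) ^ 2 = (u : ℤ) ^ 2 := by rw [hu, Int.natAbs_sq]
    have hy2 : (y : ℤ) ^ 2 = (v : ℤ) ^ 2 := by rw [hv, Int.natAbs_sq]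
    have : (u : ℤ) ^ 2 = (d : ℤ) * (v : ℤ) ^ 2 + 1 := by
      rw [← hx2, ← hy2]; linarith [hxy]
    exact_mod_cast this
  have hv1 : 1 ≤ v := Nat.one_le_iff_ne_zero.mpr (by simpa [hv] using hy0)
  have hu1 : 1 ≤ u := by nlinarith [huv]
  -- the sequence
  set f : ℕ → ℕ × ℕ := pellSeq d u v (p₁ * a) b with hf
  have hf0 : f 0 = (p₁ * a, b) := rfl
  have hfs : ∀ n, f (n + 1) = ((f n).1 * u + d * (f n).2 * v, (f n).1 * v + (f n).2 * u) :=
    fun n => rfl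
  -- invariant
  have inv : ∀ n, (f n).1 ^ 2 = d * (f n).2 ^ 2 + p₁ * g ∧ b + n ≤ (f n).2 ∧ 1 ≤ (f n).1 := by
    intro n
    induction n with
    | zero =>
      refine ⟨?_, by simp [hf0], ?_⟩
      · rw [hf0]
        simp only
        have : (p₁ * a) ^ 2 = p₁ * (p₁ * a ^ 2) := by ring
        rw [this, hab, hd]; ring
      · rw [hf0]; exact Nat.mul_pos hp1.pos (by omega)
    | succ n ih =>
      obtain ⟨heq, hle, hpos⟩ := ih
      rw [hfs n]
      set X := (f n).1; set Y := (f n).2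
      refine ⟨?_, ?_, ?_⟩
      · have hZ : ((X * u + d * Y * v : ℕ) : ℤ) ^ 2
            = (d : ℤ) * ((X * v + Y * u : ℕ) : ℤ) ^ 2 + (p₁ : ℤ) * g := by
          have h1 : (X : ℤ) ^ 2 = (d : ℤ) * (Y : ℤ) ^ 2 + (p₁ : ℤ) * g := by exact_mod_cast heq
          have h2 : (u : ℤ) ^ 2 = (d : ℤ) * (v : ℤ) ^ 2 + 1 := by exact_mod_cast huv
          push_cast
          linear_combination ((u : ℤ) ^ 2 - (d : ℤ) * (v : ℤ) ^ 2) * h1 + ((p₁ : ℤ) * g) * h2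
        exact_mod_cast hZ
      · have : Y + 1 ≤ X * v + Y * u := by nlinarith
        omega
      · have : 1 ≤ X * u := Nat.mul_pos hpos hu1
        omega
  -- strict monotonicity of Y
  have hmono : StrictMono (fun n => (f n).2) := by
    apply strictMono_nat_of_lt_succ
    intro n
    obtain ⟨_, _, hpos⟩ := inv n
    rw [hfs n]
    simp only
    nlinarith [(inv n).2.1]
  -- main injection
  set F : ℕ → ℕ × ℕ := fun n => (p₂ * (f (n + p₁)).2 ^ 2 + g, p₂ * (f (n + p₁)).2 ^ 2) with hF
  refine Set.infinite_of_injective_forall_mem (f := F) ?_ ?_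
  · intro m n hmn
    have : (f (m + p₁)).2 = (f (n + p₁)).2 := by
      have h1 : p₂ * (f (m + p₁)).2 ^ 2 = p₂ * (f (n + p₁)).2 ^ 2 := congrArg Prod.snd hmn
      have h2 := Nat.eq_of_mul_eq_mul_left hp2.pos h1
      exact Nat.pow_left_injective (by norm_num) h2
    have := hmono.injective this
    omega
  · intro n
    obtain ⟨heq, hle, hpos⟩ := inv (n + p₁)
    simp only [hF, Set.mem_setOf_eq]
    set Y := (f (n + p₁)).2 with hY
    set X := (f (n + p₁)).1 with hX
    clear_value X Y
    have hY2 : 2 ≤ Y := by omega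
    -- p₁ divides X
    have hdvd : p₁ ∣ X := by
      apply hp1.dvd_of_dvd_pow (n := 2)
      exact ⟨p₂ * Y ^ 2 + g, by rw [heq, hd]; ring⟩
    obtain ⟨A, hA⟩ := hdvd
    have hAeq : p₁ * A ^ 2 = p₂ * Y ^ 2 + g := by
      have key : p₁ * (p₁ * A ^ 2) = p₁ * (p₂ * Y ^ 2 + g) := by
        calc p₁ * (p₁ * A ^ 2) = (p₁ * A) ^ 2 := by ring
          _ = X ^ 2 := by rw [hA]
          _ = d * Y ^ 2 + p₁ * g := heq
          _ = p₁ * (p₂ * Y ^ 2 + g) := by rw [hd]; ring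
      exact Nat.eq_of_mul_eq_mul_left hp1.pos key
    have hA2 : 2 ≤ A := by
      rcases Nat.lt_or_ge A 2 with hAc | hAc
      · exfalso
        have h1 : p₁ * A ^ 2 ≤ p₁ := by
          have hA1 : A ^ 2 ≤ 1 := by interval_cases A <;> norm_num
          calc p₁ * A ^ 2 ≤ p₁ * 1 := Nat.mul_le_mul_left _ hA1
            _ = p₁ := by ring
        have h2 : p₁ + 1 ≤ 2 * Y ^ 2 := by
          have hle2 : p₁ + 1 ≤ Y := by omega
          have hle3 : Y ≤ Y ^ 2 := Nat.le_self_pow (by norm_num) Y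
          omega
        have h3 : 2 * Y ^ 2 ≤ p₂ * Y ^ 2 := Nat.mul_le_mul_right _ hp2.two_le
        linarith [hg, hAeq, h1]
      · exact hAc
    exact ⟨⟨p₁, A, hp1, hA2, hAeq.symm⟩, ⟨p₂, Y, hp2, hY2, rfl⟩, trivial⟩
end

section
/- There are infinitely many pairs of consecutive natural numbers (n, n+1) such that both n and n+1 are square-prime numbers. -/
/-!
For primes `p`, `q`, every solution of `q b² = p a² + 1` with `a, b ≥ 2` gives the square-prime
twins `(p a², q b²)`. Multiplying `a √p + b √q` by a unit `u + v √(pq)` of the Pell equation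
`u² - pq v² = 1` yields a larger solution, so one solution gives infinitely many. Here
`7 · 2² = 3 · 3² + 1` and `55² - 21 · 12² = 1`.
-/

theorem sq_mul_eq_sq_mul_add_one_of_pell {p q u v a b : ℕ} (hu : u ^ 2 = p * q * v ^ 2 + 1)
    (hab : q * b ^ 2 = p * a ^ 2 + 1) :
    q * (u * b + p * v * a) ^ 2 = p * (u * a + q * v * b) ^ 2 + 1 := by
  zify at hu hab ⊢
  linear_combination ((q : ℤ) * b ^ 2 - p * a ^ 2) * hu + hab

theorem infinite_setOf_sq_mul_eq_sq_mul_add_one {p q u v : ℕ} (hu : u ^ 2 = p * q * v ^ 2 + 1)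
    (hv : 0 < v) (hsol : ∃ a b, q * b ^ 2 = p * a ^ 2 + 1) :
    {a : ℕ | ∃ b, q * b ^ 2 = p * a ^ 2 + 1}.Infinite := by
  intro hfin
  obtain ⟨a, ⟨b, hab⟩, hmax⟩ := hfin.exists_maximal hsol
  have hu₀ : 0 < u := Nat.pos_of_ne_zero fun h => by simp [h] at hu
  have hq₀ : 0 < q := Nat.pos_of_ne_zero fun h => by simp [h] at hab
  have hb₀ : 0 < b := Nat.pos_of_ne_zero fun h => by simp [h] at hab
  have hlt : a < u * a + q * v * b := by nlinarith [Nat.mul_pos (Nat.mul_pos hq₀ hv) hb₀]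
  exact hlt.not_ge (hmax ⟨_, sq_mul_eq_sq_mul_add_one_of_pell hu hab⟩ hlt.le)

theorem isSP_and_isSP_succ_of_sq_mul_eq {p q a b : ℕ} (hp : p.Prime) (hq : q.Prime) (ha : 2 ≤ a)
    (hb : 2 ≤ b) (hab : q * b ^ 2 = p * a ^ 2 + 1) : IsSP (p * a ^ 2) ∧ IsSP (p * a ^ 2 + 1) :=
  ⟨⟨p, a, hp, ha, rfl⟩, ⟨q, b, hq, hb, hab.symm⟩⟩

theorem sp_twins_infinite : {n : ℕ | IsSP n ∧ IsSP (n + 1)}.Infinite := by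
  have hsol : {a : ℕ | ∃ b, 7 * b ^ 2 = 3 * a ^ 2 + 1}.Infinite :=
    infinite_setOf_sq_mul_eq_sq_mul_add_one (u := 55) (v := 12) (by norm_num) (by norm_num)
      ⟨3, 2, by norm_num⟩
  have hinj : Function.Injective fun a : ℕ => 3 * a ^ 2 :=
    (mul_right_injective₀ three_ne_zero).comp (Nat.pow_left_injective two_ne_zero)
  refine ((hsol.sdiff (Set.finite_Iio 2)).image hinj.injOn).mono ?_
  rintro _ ⟨a, ⟨⟨b, hab⟩, ha_small⟩, rfl⟩
  have ha : 2 ≤ a := not_lt.1 ha_small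
  have hb : 2 ≤ b := by nlinarith
  exact isSP_and_isSP_succ_of_sq_mul_eq Nat.prime_three (by norm_num) ha hb hab
end
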